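/- Let K_α ⊆ [0,1) be a finite set, τ, d ∈ ℂ with Im(τ) > 0. Then the family of entire functions { z ↦ e^{2πiαz} θ(z + τα + d | τ) : α ∈ K_α } is linearly independent over ℂ. -/

import Mathlib

/-!
Translation `z ↦ z + 1` acts on `z ↦ e^{2πiαz} θ(z + τα + d | τ)` by the scalar `-e^{2πiα}`,
since `θ(z + 1) = -θ(z)`. These scalars are pairwise distinct for `α ∈ [0,1)`, so the functions
are eigenvectors of one linear operator for distinct eigenvalues, hence linearly independent once
they are nonzero. That `θ(· | τ)` is not identically zero follows from its expression through
`jacobiTheta₂`, whose mean over `[0,1]` is its constant Fourier coefficient `1`.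
-/

open Complex
open scoped Real

/-- The shifted Jacobi theta function
`θ(z|τ) = -∑_{n∈ℤ} exp(iπτ(n+1/2)²) exp(2πi(n+1/2)(z+1/2))`. -/
noncomputable def shiftedJacobiTheta (z τ : ℂ) : ℂ :=
  -∑' n : ℤ, Complex.exp (Real.pi * Complex.I * τ * ((n : ℂ) + 1 / 2) ^ 2) *
      Complex.exp (2 * Real.pi * Complex.I * ((n : ℂ) + 1 / 2) * (z + 1 / 2))

lemma integral_jacobiTheta₂_term (n : ℤ) (τ : ℂ) :
    ∫ x in (0 : ℝ)..1, jacobiTheta₂_term n x τ = if n = 0 then 1 else 0 := by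
  split_ifs with hn
  · simp [hn, jacobiTheta₂_term]
  have hc : 2 * π * I * n ≠ 0 := by simp [Real.pi_ne_zero, I_ne_zero, hn]
  simp_rw [jacobiTheta₂_term, Complex.exp_add, intervalIntegral.integral_mul_const,
    integral_exp_mul_complex hc, ofReal_one, ofReal_zero, mul_zero, exp_zero, mul_one,
    show 2 * π * I * n = n * (2 * π * I) by ring, exp_int_mul_two_pi_mul_I]
  simp

lemma integral_jacobiTheta₂ {τ : ℂ} (hτ : 0 < τ.im) :
    ∫ x in (0 : ℝ)..1, jacobiTheta₂ x τ = 1 := by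
  let term (n : ℤ) : C(ℝ, ℂ) := ⟨fun x => jacobiTheta₂_term n x τ, by
    unfold jacobiTheta₂_term; fun_prop⟩
  have hsum := intervalIntegral.hasSum_intervalIntegral_of_summable_norm (a := 0) (b := 1)
    (f := term) <| by
    refine .of_nonneg_of_le (fun _ => norm_nonneg _) (fun n => ?_)
      (by simpa using summable_pow_mul_jacobiTheta₂_term_bound 0 hτ 0)
    refine (ContinuousMap.norm_le _ (Real.exp_nonneg _)).2 fun x => ?_
    simpa [term] using
      norm_jacobiTheta₂_term_le (S := 0) (z := ((x : ℝ) : ℂ)) hτ (by simp) le_rfl n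
  simp only [term, ContinuousMap.coe_mk, integral_jacobiTheta₂_term] at hsum
  exact hsum.unique (hasSum_ite_eq 0 1)

lemma exists_jacobiTheta₂_ne_zero {τ : ℂ} (hτ : 0 < τ.im) : ∃ w, jacobiTheta₂ w τ ≠ 0 := by
  by_contra! h
  simpa [h] using integral_jacobiTheta₂ hτ

lemma shiftedJacobiTheta_eq_neg_exp_mul_jacobiTheta₂ (z τ : ℂ) :
    shiftedJacobiTheta z τ =
      -(exp (π * I * τ / 4 + π * I * (z + 1 / 2)) * jacobiTheta₂ (z + 1 / 2 + τ / 2) τ) := by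
  rw [shiftedJacobiTheta, jacobiTheta₂, ← tsum_mul_left, neg_inj]
  refine tsum_congr fun n => ?_
  rw [jacobiTheta₂_term, ← exp_add, ← exp_add]
  congr 1
  ring

lemma shiftedJacobiTheta_add_one (z τ : ℂ) :
    shiftedJacobiTheta (z + 1) τ = -shiftedJacobiTheta z τ := by
  simp only [shiftedJacobiTheta_eq_neg_exp_mul_jacobiTheta₂]
  rw [show z + 1 + 1 / 2 + τ / 2 = (z + 1 / 2 + τ / 2) + 1 by ring, jacobiTheta₂_add_left,
    show (π : ℂ) * I * τ / 4 + π * I * (z + 1 + 1 / 2)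
      = (π * I * τ / 4 + π * I * (z + 1 / 2)) + π * I by ring,
    exp_add, exp_pi_mul_I]
  ring

lemma exists_shiftedJacobiTheta_ne_zero {τ : ℂ} (hτ : 0 < τ.im) :
    ∃ z, shiftedJacobiTheta z τ ≠ 0 := by
  obtain ⟨w, hw⟩ := exists_jacobiTheta₂_ne_zero hτ
  refine ⟨w - 1 / 2 - τ / 2, ?_⟩
  rw [shiftedJacobiTheta_eq_neg_exp_mul_jacobiTheta₂,
    show w - 1 / 2 - τ / 2 + 1 / 2 + τ / 2 = w by ring]
  exact neg_ne_zero.2 (mul_ne_zero (exp_ne_zero _) hw)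

lemma injOn_exp_two_pi_mul_I : Set.InjOn (fun α : ℝ => exp (2 * π * I * α)) (Set.Ico 0 1) := by
  intro a ha b hb hab
  have key := Circle.exp_injOn_Ico (a := 0) (b := 2 * π) (by simp)
    (x₁ := 2 * π * a) ⟨by nlinarith [Real.pi_pos, ha.1], by nlinarith [Real.pi_pos, ha.2]⟩
    (x₂ := 2 * π * b) ⟨by nlinarith [Real.pi_pos, hb.1], by nlinarith [Real.pi_pos, hb.2]⟩
    (Circle.ext (by simpa [Circle.coe_exp, mul_comm, mul_left_comm, mul_assoc] using hab))
  simpa [Real.pi_ne_zero] using key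

lemma hasEigenvector_funLeft_add_one_exp_mul {f : ℂ → ℂ} {μ : ℂ} (hf : ∀ z, f (z + 1) = μ * f z)
    (hf0 : f ≠ 0) (c a : ℂ) :
    Module.End.HasEigenvector (LinearMap.funLeft ℂ ℂ (· + 1 : ℂ → ℂ)) (exp (2 * π * I * c) * μ)
      (fun z => exp (2 * π * I * c * z) * f (z + a)) := by
  refine ⟨Module.End.mem_eigenspace_iff.2 (funext fun z => ?_), fun h => hf0 ?_⟩
  · simp only [LinearMap.funLeft_apply, Pi.smul_apply, smul_eq_mul,
      add_right_comm z 1 a, hf, mul_add, exp_add, mul_one]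
    ring
  · funext w
    simpa using congrFun h (w - a)

/-- For a finite set `K ⊆ [0,1)` and `τ, d ∈ ℂ` with `Im τ > 0`, the family of
entire functions `z ↦ e^{2πiαz} θ(z + τα + d | τ)`, `α ∈ K`, is linearly
independent over `ℂ`. -/
theorem linearIndependent_exp_mul_shiftedJacobiTheta
    (K : Finset ℝ) (hK : ∀ α ∈ K, 0 ≤ α ∧ α < 1)
    (τ d : ℂ) (hτ : 0 < τ.im) :
    LinearIndependent ℂ fun (α : K) (z : ℂ) =>
      Complex.exp (2 * Real.pi * Complex.I * (α : ℝ) * z) *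
        shiftedJacobiTheta (z + τ * (α : ℝ) + d) τ := by
  obtain ⟨w, hw⟩ := exists_shiftedJacobiTheta_ne_zero hτ
  have hθ : (shiftedJacobiTheta · τ) ≠ 0 := fun h => hw (congrFun h w)
  have hinj : Function.Injective fun α : K => exp (2 * Real.pi * I * (α : ℝ)) * -1 :=
    fun α β h => Subtype.ext <| injOn_exp_two_pi_mul_I (hK α α.2) (hK β β.2) (by simpa using h)
  refine Module.End.eigenvectors_linearIndependent' (LinearMap.funLeft ℂ ℂ (· + 1 : ℂ → ℂ))
    _ hinj _ fun α => ?_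
  simpa only [add_assoc] using hasEigenvector_funLeft_add_one_exp_mul
    (fun z => by rw [shiftedJacobiTheta_add_one, neg_one_mul]) hθ (α : ℝ) (τ * (α : ℝ) + d)
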